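/- Suppose the greedy spanner augmentation algorithm, run with parameter t on an initial metric graph G, adds at least k+1 edges a_1, ..., a_{k+1} (in nondecreasing order of length), where each a_i satisfies d_{G_{i-1}}(a_i) > t · d_M(a_i) and G_i = G_{i-1} ∪ {a_i}. Let t* be the minimum dilation achievable by adding any k edges to G. Then (k+1) · t* > t. -/

import Mathlib

/-!
Suppose `t ≥ (k + 1) t*` and let `W i` be a shortest path between the ends of the greedy edge
`a i` in `G ∪ S`, so `|W i| ≤ t* |a i|`. In the graph `Ei i` current when `a i` is added, the
maximal stretches of `W i` leaving the `G`-component of `a i` are either long, or can be replaced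
by paths of stretch `t`; as `d_{Ei i}(a i) > t |a i|`, in both cases the `G`-edges of `W i`
inside that component weigh at most `t (t* - 1) / (t - 1) · |a i|`.

The `S`-edges used by the `k + 1` paths give `k + 1` vectors in `(ZMod 2)^S`, so a nonempty
family `K` of them cancels. For `j = max K`, the `G`-edges of the `W i` (`i ∈ K`) together with
the greedy edges `a m` (`m ∈ K \ {j}`) have odd degree exactly at the ends of `a j`, hence contain
a walk between them in `Ei j` that stays in the component of `a j`. Its length is at most
`(t (t* - 1) + k (t t* - 1)) / (t - 1) · |a j| ≤ t |a j|`, contradicting the choice of `a j`.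
-/

variable {V : Type*}

/-- The length of a walk, given as a list of vertices, under distance function `d`. -/
def walkLen (d : V → V → ℝ) : List V → ℝ
  | [] => 0
  | [_] => 0
  | a :: b :: l => d a b + walkLen d (b :: l)

/-- `l` is a walk from `u` to `v` in the graph with edge relation `E`. -/
def IsWalk (E : V → V → Prop) (u v : V) (l : List V) : Prop :=
  l.head? = some u ∧ l.getLast? = some v ∧ l.Chain' E

/-- Shortest-path distance between `u` and `v` in the graph with edge relation `E`,
where each edge `(x, y)` has weight `d x y`. -/
noncomputable def graphDist (E : V → V → Prop) (d : V → V → ℝ) (u v : V) : ℝ :=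
  sInf {L : ℝ | ∃ l : List V, IsWalk E u v l ∧ walkLen d l = L}

open Relation

section Walks

variable {E : V → V → Prop} {d : V → V → ℝ} {u v w x y : V} {l m : List V}

theorem isWalk_iff : IsWalk E u v l ↔ l.head? = some u ∧ l.getLast? = some v ∧ l.IsChain E :=
  Iff.rfl

theorem IsWalk.ne_nil (h : IsWalk E u v l) : l ≠ [] := by
  rintro rfl
  exact absurd h.1 (by simp)

theorem IsWalk.exists_eq_cons (h : IsWalk E u v l) : ∃ l', l = u :: l' := by
  obtain ⟨x, l', rfl⟩ := List.exists_cons_of_ne_nil h.ne_nil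
  obtain rfl : x = u := Option.some.inj h.1
  exact ⟨l', rfl⟩

theorem isWalk_singleton (u : V) : IsWalk E u u [u] := ⟨rfl, rfl, .singleton u⟩

theorem isWalk_cons_cons :
    IsWalk E u v (x :: y :: l) ↔ x = u ∧ E x y ∧ IsWalk E y v (y :: l) := by
  simp only [isWalk_iff, List.head?_cons, Option.some.injEq, List.getLast?_cons_cons,
    List.isChain_cons_cons, true_and]
  tauto

theorem IsWalk.cons (hxy : E x y) (h : IsWalk E y v l) : IsWalk E x v (x :: l) := by
  obtain ⟨l, rfl⟩ := h.exists_eq_cons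
  exact isWalk_cons_cons.2 ⟨rfl, hxy, h⟩

theorem IsWalk.suffix (h : IsWalk E u v (l ++ x :: m)) : IsWalk E x v (x :: m) :=
  ⟨rfl, by rw [← h.2.1, List.getLast?_append_cons], (List.isChain_split.1 h.2.2).2⟩

theorem IsWalk.append (h₁ : IsWalk E u v l) (h₂ : IsWalk E v w (v :: m)) :
    IsWalk E u w (l ++ m) := by
  have hne := h₁.ne_nil
  obtain ⟨p, rfl⟩ := List.getLast?_eq_some_iff.1 h₁.2.1
  refine ⟨by rw [List.head?_append_of_ne_nil _ hne]; exact h₁.1, ?_, ?_⟩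
  · rw [List.append_assoc, List.singleton_append, List.getLast?_append_cons]
    exact h₂.2.1
  · rw [List.append_assoc, List.singleton_append]
    exact List.isChain_split.2 ⟨h₁.2.2, h₂.2.2⟩

theorem IsWalk.reflTransGen_of_mem (h : IsWalk E u v l) (hx : x ∈ l) : ReflTransGen E u x := by
  refine h.2.2.induction (ReflTransGen E u) l (fun _ _ hyz hy => hy.tail hyz) (fun hne => ?_)
    x hx
  rw [Option.some.inj ((List.head?_eq_some_head hne).symm.trans h.1)]

theorem IsWalk.reflTransGen (h : IsWalk E u v l) : ReflTransGen E u v :=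
  h.reflTransGen_of_mem (List.mem_of_getLast? h.2.1)

theorem exists_isWalk_of_reflTransGen (h : ReflTransGen E u v) : ∃ l, IsWalk E u v l := by
  obtain ⟨l, hl, hlast⟩ := List.exists_isChain_cons_of_relationReflTransGen h
  exact ⟨u :: l, rfl, by rw [List.getLast?_eq_some_getLast (List.cons_ne_nil _ _), hlast], hl⟩

theorem walkLen_cons_cons : walkLen d (x :: y :: l) = d x y + walkLen d (y :: l) := rfl

theorem walkLen_cons (h : l.head? = some y) : walkLen d (x :: l) = d x y + walkLen d l := by
  cases l with
  | nil => simp at h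
  | cons y' l =>
    obtain rfl : y' = y := Option.some.inj h
    rfl

theorem walkLen_nonneg (hd : ∀ x y, 0 ≤ d x y) : ∀ l : List V, 0 ≤ walkLen d l
  | [] | [_] => le_rfl
  | x :: y :: l => add_nonneg (hd x y) (walkLen_nonneg hd (y :: l))

theorem walkLen_le_cons (hd : ∀ x y, 0 ≤ d x y) : walkLen d l ≤ walkLen d (x :: l) := by
  cases l with
  | nil => exact le_rfl
  | cons y l => exact le_add_of_nonneg_left (hd x y)

theorem walkLen_le_append (hd : ∀ x y, 0 ≤ d x y) : walkLen d m ≤ walkLen d (l ++ m) := by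
  induction l with
  | nil => exact le_rfl
  | cons x l ih => exact ih.trans (walkLen_le_cons hd)

theorem walkLen_append_cons :
    walkLen d (l ++ x :: m) = walkLen d (l ++ [x]) + walkLen d (x :: m) := by
  induction l with
  | nil => simp [walkLen]
  | cons y l ih =>
    cases l with
    | nil => simp [walkLen]
    | cons z l =>
      simp only [List.cons_append, walkLen_cons_cons] at ih ⊢
      rw [ih, add_assoc]

theorem walkLen_append_of_getLast? (h : l.getLast? = some v) :
    walkLen d (l ++ m) = walkLen d l + walkLen d (v :: m) := by
  obtain ⟨p, rfl⟩ := List.getLast?_eq_some_iff.1 h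
  rw [List.append_assoc, List.singleton_append, walkLen_append_cons]

theorem dist_le_walkLen [PseudoMetricSpace V] :
    ∀ {l : List V} {u v : V}, IsWalk E u v l → dist u v ≤ walkLen dist l
  | [], _, _, h => absurd rfl h.ne_nil
  | [x], u, v, h => by
    obtain rfl : x = u := Option.some.inj h.1
    obtain rfl : x = v := Option.some.inj h.2.1
    simp [walkLen]
  | x :: y :: l, u, v, h => by
    obtain ⟨rfl, -, h⟩ := isWalk_cons_cons.1 h
    exact (dist_triangle x y v).trans (add_le_add le_rfl (dist_le_walkLen h))

theorem graphDist_le_walkLen (hd : ∀ x y, 0 ≤ d x y) (h : IsWalk E u v l) :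
    graphDist E d u v ≤ walkLen d l :=
  csInf_le ⟨0, by rintro _ ⟨l, -, rfl⟩; exact walkLen_nonneg hd l⟩ ⟨l, h, rfl⟩

theorem graphDist_le_of_rel (hd : ∀ x y, 0 ≤ d x y) (h : E u v) :
    graphDist E d u v ≤ d u v := by
  simpa [walkLen] using graphDist_le_walkLen hd ((isWalk_singleton v).cons h)

theorem reflTransGen_of_graphDist_pos (h : 0 < graphDist E d u v) : ReflTransGen E u v := by
  by_contra hn
  have hempty : {L | ∃ l, IsWalk E u v l ∧ walkLen d l = L} = ∅ :=
    Set.eq_empty_of_forall_notMem fun _ ⟨_, hl, _⟩ => hn hl.reflTransGen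
  simp [graphDist, hempty] at h

theorem exists_nodup_isWalk_le (hd : ∀ x y, 0 ≤ d x y) : ∀ {l : List V} {u v : V},
    IsWalk E u v l → ∃ l', IsWalk E u v l' ∧ l'.Nodup ∧ walkLen d l' ≤ walkLen d l
  | [], _, _, h => absurd rfl h.ne_nil
  | [x], _, _, h => ⟨[x], h, List.nodup_singleton x, le_rfl⟩
  | x :: y :: l, u, v, h => by
    obtain ⟨rfl, hxy, h⟩ := isWalk_cons_cons.1 h
    obtain ⟨l', hl', hnd, hle⟩ := exists_nodup_isWalk_le hd h
    by_cases hx : x ∈ l'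
    · obtain ⟨p, r, rfl⟩ := List.append_of_mem hx
      exact ⟨x :: r, hl'.suffix, hnd.sublist (List.sublist_append_right p _),
        (walkLen_le_append hd).trans (hle.trans (walkLen_le_cons hd))⟩
    · refine ⟨x :: l', hl'.cons hxy, List.nodup_cons.2 ⟨hx, hnd⟩, ?_⟩
      rw [walkLen_cons hl'.1, walkLen_cons_cons]
      exact add_le_add le_rfl hle

theorem exists_isWalk_walkLen_eq_graphDist [Fintype V] (hd : ∀ x y, 0 ≤ d x y)
    (h : ReflTransGen E u v) : ∃ l, IsWalk E u v l ∧ walkLen d l = graphDist E d u v := by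
  have hfin : {l : List V | IsWalk E u v l ∧ l.Nodup}.Finite :=
    (List.finite_length_le V (Fintype.card V)).subset fun _ hl => List.Nodup.length_le_card hl.2
  obtain ⟨l₀, hl₀⟩ := exists_isWalk_of_reflTransGen h
  obtain ⟨l₁, hl₁, hnd, -⟩ := exists_nodup_isWalk_le hd hl₀
  obtain ⟨l, ⟨hl, -⟩, hmin⟩ :=
    Set.exists_min_image _ (walkLen d) hfin ⟨l₁, hl₁, hnd⟩
  refine ⟨l, hl, le_antisymm ?_ (graphDist_le_walkLen hd hl)⟩
  refine le_csInf ⟨_, l, hl, rfl⟩ ?_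
  rintro _ ⟨l', hl', rfl⟩
  obtain ⟨l'', hl'', hnd'', hle⟩ := exists_nodup_isWalk_le hd hl'
  exact (hmin l'' ⟨hl'', hnd''⟩).trans hle

theorem exists_isWalk_walkLen_le [Fintype V] [PseudoMetricSpace V] {c : ℝ}
    (h : ReflTransGen E u v) (hc : graphDist E dist u v ≤ c) :
    ∃ l, IsWalk E u v l ∧ walkLen dist l ≤ c := by
  obtain ⟨l, hl, hl_eq⟩ :=
    exists_isWalk_walkLen_eq_graphDist (d := dist) (fun _ _ => dist_nonneg) h
  exact ⟨l, hl, hl_eq ▸ hc⟩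

theorem graphDist_triangle [Fintype V] (hd : ∀ x y, 0 ≤ d x y) (huv : ReflTransGen E u v)
    (hvw : ReflTransGen E v w) : graphDist E d u w ≤ graphDist E d u v + graphDist E d v w := by
  obtain ⟨l, hl, hl_eq⟩ := exists_isWalk_walkLen_eq_graphDist hd huv
  obtain ⟨m, hm, hm_eq⟩ := exists_isWalk_walkLen_eq_graphDist hd hvw
  obtain ⟨m, rfl⟩ := hm.exists_eq_cons
  calc graphDist E d u w ≤ walkLen d (l ++ m) := graphDist_le_walkLen hd (hl.append hm)
    _ = _ := by rw [walkLen_append_of_getLast? hl.2.1, hl_eq, hm_eq]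

end Walks

section EdgeMass

variable {R : V → V → Prop} {u v x y : V} {l : List V}

def walkEdges : List V → Multiset (Sym2 V)
  | x :: y :: l => s(x, y) ::ₘ walkEdges (y :: l)
  | _ => 0

theorem walkEdges_cons_cons : walkEdges (x :: y :: l) = s(x, y) ::ₘ walkEdges (y :: l) := rfl

theorem mem_of_mem_walkEdges :
    ∀ {l : List V} {e : Sym2 V}, e ∈ walkEdges l → x ∈ e → x ∈ l
  | x' :: y' :: l, e, he, hx => by
    rcases Multiset.mem_cons.1 he with rfl | he
    · rcases Sym2.mem_iff.1 hx with rfl | rfl <;> simp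
    · exact List.mem_cons_of_mem _ (mem_of_mem_walkEdges he hx)

theorem isChain_of_walkEdges {G : Set (Sym2 V)} (hG : ∀ x y, s(x, y) ∈ G → R x y) :
    ∀ {l : List V}, (∀ e ∈ walkEdges l, e ∈ G) → l.IsChain R
  | [], _ => .nil
  | [_], _ => .singleton _
  | x :: y :: l, h => by
    simp only [walkEdges_cons_cons, Multiset.mem_cons, forall_eq_or_imp] at h
    exact .cons_cons (hG x y h.1) (isChain_of_walkEdges hG h.2)

theorem exists_rel_of_mem_walkEdges :
    ∀ {l : List V} {e : Sym2 V}, l.IsChain R → e ∈ walkEdges l →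
      ∃ x y, R x y ∧ e = s(x, y)
  | x :: y :: l, e, h, he => by
    rw [List.isChain_cons_cons] at h
    rcases Multiset.mem_cons.1 he with rfl | he
    · exact ⟨x, y, h.1, rfl⟩
    · exact exists_rel_of_mem_walkEdges h.2 he

variable [PseudoMetricSpace V]

def edgeDist : Sym2 V → ℝ := Sym2.lift ⟨dist, dist_comm⟩

@[simp]
theorem edgeDist_mk : edgeDist s(x, y) = dist x y := rfl

theorem edgeDist_nonneg (e : Sym2 V) : 0 ≤ edgeDist e :=
  e.ind fun _ _ => dist_nonneg

noncomputable def edgeMass (P : Set (Sym2 V)) : Multiset (Sym2 V) →+ ℝ :=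
  Multiset.sumAddMonoidHom.comp (Multiset.mapAddMonoidHom (P.indicator edgeDist))

variable {P Q : Set (Sym2 V)} {N N' : Multiset (Sym2 V)}

theorem edgeMass_apply : edgeMass P N = (N.map (P.indicator edgeDist)).sum := rfl

@[simp]
theorem edgeMass_singleton (e : Sym2 V) : edgeMass P {e} = P.indicator edgeDist e := by
  simp [edgeMass_apply]

theorem edgeMass_cons (e : Sym2 V) :
    edgeMass P (e ::ₘ N) = P.indicator edgeDist e + edgeMass P N := by
  rw [← Multiset.singleton_add, map_add, edgeMass_singleton]

theorem edgeMass_nonneg : 0 ≤ edgeMass P N :=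
  Multiset.sum_nonneg fun _ hx => by
    obtain ⟨e, -, rfl⟩ := Multiset.mem_map.1 hx
    exact Set.indicator_nonneg (fun e _ => edgeDist_nonneg e) e

theorem edgeMass_mono (h : N ≤ N') : edgeMass P N ≤ edgeMass P N' := by
  obtain ⟨N'', rfl⟩ := Multiset.le_iff_exists_add.1 h
  rw [map_add]
  exact le_add_of_nonneg_right edgeMass_nonneg

theorem edgeMass_add_compl : edgeMass P N + edgeMass Pᶜ N = edgeMass Set.univ N := by
  simp only [edgeMass_apply, ← Multiset.sum_map_add, Set.indicator_univ,
    ← Pi.add_apply (P.indicator edgeDist), Set.indicator_self_add_compl]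

theorem edgeMass_eq_univ (h : ∀ e ∈ N, e ∈ P) : edgeMass P N = edgeMass Set.univ N :=
  congrArg Multiset.sum (Multiset.map_congr rfl fun e he => by
    rw [Set.indicator_of_mem (h e he), Set.indicator_of_mem (Set.mem_univ e)])

theorem edgeMass_filter [DecidablePred (· ∈ Q)] :
    edgeMass P (N.filter (· ∈ Q)) = edgeMass (Q ∩ P) N := by
  induction N using Multiset.induction_on with
  | empty => simp
  | cons e N ih =>
    rw [Multiset.filter_cons, map_add, edgeMass_cons, ih, ← Set.indicator_indicator]
    by_cases he : e ∈ Q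
    · rw [if_pos he, edgeMass_singleton, Set.indicator_of_mem he]
    · rw [if_neg he, map_zero, Set.indicator_of_notMem he]

theorem walkLen_eq_edgeMass : ∀ l : List V, walkLen dist l = edgeMass Set.univ (walkEdges l)
  | [] | [_] => (map_zero _).symm
  | x :: y :: l => by
    rw [walkLen_cons_cons, walkEdges_cons_cons, edgeMass_cons, walkLen_eq_edgeMass (y :: l)]
    simp

theorem walkLen_le_edgeMass (hle : walkEdges l ≤ N) (hP : ∀ e ∈ walkEdges l, e ∈ P) :
    walkLen dist l ≤ edgeMass P N := by
  rw [walkLen_eq_edgeMass, ← edgeMass_eq_univ hP]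
  exact edgeMass_mono hle

end EdgeMass

section Shortcut

variable [PseudoMetricSpace V] {R : V → V → Prop} {C : Set V} {F : Set (Sym2 V)}
  {t D : ℝ} {u v x y : V} {l : List V}

theorem ne_of_mul_dist_lt_graphDist (h : t * dist u v < graphDist R dist u v) : u ≠ v := by
  rintro rfl
  have := graphDist_le_walkLen (E := R) (d := dist) (fun _ _ => dist_nonneg) (isWalk_singleton u)
  simp only [dist_self, mul_zero] at h
  exact (h.trans_le this).false

theorem graphDist_le_mul_or_le (ht : 0 ≤ t)
    (hshort : ∀ x y, x ≠ y → dist x y < D → graphDist R dist x y ≤ t * dist x y)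
    {acc : ℝ} (h : dist x y ≤ acc) : graphDist R dist x y ≤ t * acc ∨ D ≤ acc := by
  rcases eq_or_ne x y with rfl | hxy
  · refine .inl ((graphDist_le_walkLen (fun _ _ => dist_nonneg) (isWalk_singleton x)).trans ?_)
    exact mul_nonneg ht (dist_nonneg.trans h)
  · rcases lt_or_ge (dist x y) D with hD | hD
    · exact .inl ((hshort x y hxy hD).trans (mul_le_mul_of_nonneg_left h ht))
    · exact .inr (hD.trans h)

-- Follow `l`, keeping its `F`-edges and replacing each maximal run of other edges, starting at
-- `x`, by an `R`-path of stretch `t`; this is possible while the run is shorter than `D`, and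
-- `acc` bounds the length of the current run.
theorem graphDist_le_edgeMass_or_le [Fintype V] (ht : 0 ≤ t)
    (hshort : ∀ x y, x ≠ y → dist x y < D → graphDist R dist x y ≤ t * dist x y)
    (hC : ∀ x ∈ C, ∀ y ∈ C, ReflTransGen R x y)
    (hF : ∀ x y, s(x, y) ∈ F → R x y ∧ x ∈ C ∧ y ∈ C) :
    ∀ {l : List V} {x z : V} {acc : ℝ}, l.head? = some z → l.getLast? = some y → x ∈ C →
      y ∈ C → dist x z ≤ acc →
      graphDist R dist x y ≤
          t * acc + edgeMass F (walkEdges l) + t * edgeMass Fᶜ (walkEdges l) ∨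
        D ≤ acc + edgeMass Fᶜ (walkEdges l)
  | [], _, _, _, hz, _, _, _, _ => by simp at hz
  | [z'], x, z, acc, hz, hy, _, _, hacc => by
    obtain rfl : z' = z := Option.some.inj hz
    obtain rfl : z' = y := Option.some.inj hy
    simpa [walkEdges] using graphDist_le_mul_or_le ht hshort hacc
  | z' :: z₂ :: l, x, z, acc, hz, hy, hx, hyC, hacc => by
    obtain rfl : z' = z := Option.some.inj hz
    rw [List.getLast?_cons_cons] at hy
    have hd : ∀ x y : V, 0 ≤ dist x y := fun _ _ => dist_nonneg
    have hσ : 0 ≤ edgeMass Fᶜ (walkEdges (z₂ :: l)) := edgeMass_nonneg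
    simp only [walkEdges_cons_cons, edgeMass_cons]
    by_cases he : s(z', z₂) ∈ F
    · obtain ⟨hR, hz'C, hz₂C⟩ := hF _ _ he
      rw [Set.indicator_of_mem he, Set.indicator_of_notMem (Set.notMem_compl_iff.2 he),
        edgeDist_mk]
      rcases graphDist_le_mul_or_le ht hshort hacc with h₁ | h₁
      · rcases graphDist_le_edgeMass_or_le ht hshort hC hF (l := z₂ :: l) (x := z₂) rfl hy
          hz₂C hyC (dist_self z₂).le with h₂ | h₂
        · left
          have h₃ := graphDist_triangle hd (hC x hx z' hz'C) (hC z' hz'C y hyC)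
          have h₄ := graphDist_triangle hd (hC z' hz'C z₂ hz₂C) (hC z₂ hz₂C y hyC)
          have h₅ := graphDist_le_of_rel hd hR
          linarith
        · right
          linarith [dist_nonneg.trans hacc]
      · right
        linarith
    · rw [Set.indicator_of_notMem he, Set.indicator_of_mem (Set.mem_compl he), edgeDist_mk]
      have hacc' : dist x z₂ ≤ acc + dist z' z₂ := (dist_triangle _ _ _).trans (by linarith)
      rcases graphDist_le_edgeMass_or_le ht hshort hC hF (l := z₂ :: l) rfl hy hx hyC hacc'
        with h | h
      · left
        linarith
      · right
        linarith

theorem mul_dist_le_edgeMass [Fintype V] (ht : 0 ≤ t)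
    (hshort : ∀ x y, x ≠ y → dist x y < dist u v → graphDist R dist x y ≤ t * dist x y)
    (hC : ∀ x ∈ C, ∀ y ∈ C, ReflTransGen R x y)
    (hF : ∀ x y, s(x, y) ∈ F → R x y ∧ x ∈ C ∧ y ∈ C) (hu : u ∈ C) (hv : v ∈ C)
    (hlu : l.head? = some u) (hlv : l.getLast? = some v)
    (hgreedy : t * dist u v < graphDist R dist u v) :
    t * dist u v ≤ edgeMass F (walkEdges l) + t * edgeMass Fᶜ (walkEdges l) := by
  have hm : 0 ≤ edgeMass F (walkEdges l) := edgeMass_nonneg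
  rcases graphDist_le_edgeMass_or_le ht hshort hC hF hlu hlv hu hv (dist_self u).le with h | h
  · linarith
  · nlinarith

end Shortcut

section Component

variable [PseudoMetricSpace V] [Fintype V] {E R : V → V → Prop} [Std.Symm E]
  {t τ : ℝ} {u v u₀ : V} {l : List V}

def componentEdges (E : V → V → Prop) (u : V) : Set (Sym2 V) :=
  {e | ∀ x ∈ e, ReflTransGen E u x}

def innerEdges (E : V → V → Prop) [Std.Symm E] (u : V) : Set (Sym2 V) :=
  Sym2.fromRel ‹_› ∩ componentEdges E u

theorem sub_one_mul_edgeMass_innerEdges_le (hER : E ≤ R) (ht : 0 ≤ t)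
    (hshort : ∀ x y, x ≠ y → dist x y < dist u v → graphDist R dist x y ≤ t * dist x y)
    (hu₀ : ReflTransGen E u₀ u) (huv : ReflTransGen E u v)
    (hlu : l.head? = some u) (hlv : l.getLast? = some v)
    (hgreedy : t * dist u v < graphDist R dist u v) (hlen : walkLen dist l ≤ τ * dist u v) :
    (t - 1) * edgeMass (innerEdges E u₀) (walkEdges l) ≤ t * (τ - 1) * dist u v := by
  have h := mul_dist_le_edgeMass (C := {x | ReflTransGen E u₀ x}) (F := innerEdges E u₀)
    ht hshort (fun x hx y hy => ReflTransGen.mono hER x y ((Std.Symm.symm _ _ hx).trans hy))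
    (fun x y ⟨hxy, hc⟩ => ⟨hER x y (Sym2.fromRel_prop.1 hxy), hc x (Sym2.mem_mk_left x y),
      hc y (Sym2.mem_mk_right x y)⟩)
    hu₀ (hu₀.trans huv) hlu hlv hgreedy
  rw [walkLen_eq_edgeMass, ← edgeMass_add_compl (P := innerEdges E u₀)] at hlen
  nlinarith

theorem sub_one_mul_add_indicator_le (hER : E ≤ R) (ht : 1 ≤ t) (hτ : 1 ≤ τ)
    (hshort : ∀ x y, x ≠ y → dist x y < dist u v → graphDist R dist x y ≤ t * dist x y)
    (huv : ReflTransGen E u v) (hlu : l.head? = some u) (hlv : l.getLast? = some v)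
    (hgreedy : t * dist u v < graphDist R dist u v) (hlen : walkLen dist l ≤ τ * dist u v) :
    (t - 1) * (edgeMass (innerEdges E u₀) (walkEdges l) +
      (componentEdges E u₀).indicator edgeDist s(u, v)) ≤ (t * τ - 1) * dist u v := by
  by_cases huv₀ : s(u, v) ∈ componentEdges E u₀
  · have := sub_one_mul_edgeMass_innerEdges_le hER (by linarith) hshort
      (huv₀ u (Sym2.mem_mk_left u v)) huv hlu hlv hgreedy hlen
    rw [Set.indicator_of_mem huv₀, edgeDist_mk]
    linarith
  · have hm : edgeMass (innerEdges E u₀) (walkEdges l) ≤ τ * dist u v := by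
      rw [walkLen_eq_edgeMass, ← edgeMass_add_compl (P := innerEdges E u₀)] at hlen
      linarith [edgeMass_nonneg (P := (innerEdges E u₀)ᶜ) (N := walkEdges l)]
    rw [Set.indicator_of_notMem huv₀, add_zero]
    nlinarith [dist_nonneg (x := u) (y := v)]

end Component

section Parity

variable {u v w x : V}

open scoped Classical in
noncomputable def endpointParity (w : V) : Sym2 V → ZMod 2 :=
  Sym2.lift ⟨fun x y => (if x = w then 1 else 0) + (if y = w then 1 else 0),
    fun _ _ => add_comm _ _⟩

noncomputable def degMod2 (w : V) : Multiset (Sym2 V) →+ ZMod 2 :=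
  Multiset.sumAddMonoidHom.comp (Multiset.mapAddMonoidHom (endpointParity w))

theorem degMod2_apply (N : Multiset (Sym2 V)) : degMod2 w N = (N.map (endpointParity w)).sum :=
  rfl

@[simp]
theorem degMod2_singleton (e : Sym2 V) : degMod2 w {e} = endpointParity w e := by
  simp [degMod2_apply]

theorem mem_of_endpointParity_ne_zero {e : Sym2 V} (h : endpointParity w e ≠ 0) : w ∈ e := by
  induction e using Sym2.ind with
  | _ x y =>
    by_contra hw
    rw [Sym2.mem_iff, not_or] at hw
    simp [endpointParity, Ne.symm hw.1, Ne.symm hw.2] at h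

theorem endpointParity_mk_ne_zero (h : u ≠ v) : endpointParity u s(u, v) ≠ 0 := by
  simp [endpointParity, Ne.symm h]

theorem endpointParity_mk_self (x : V) : endpointParity w s(x, x) = 0 :=
  CharTwo.add_self_eq_zero _

theorem endpointParity_mk_add_mk (x u v : V) :
    endpointParity w s(x, u) + endpointParity w s(u, v) = endpointParity w s(x, v) := by
  have key : ∀ a b c : ZMod 2, a + b + (b + c) = a + c := by decide
  exact key _ _ _

theorem degMod2_walkEdges : ∀ {l : List V} {u v : V}, l.head? = some u → l.getLast? = some v →
    degMod2 w (walkEdges l) = endpointParity w s(u, v)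
  | [], _, _, h, _ => by simp at h
  | [x], u, v, hu, hv => by
    obtain rfl : x = u := Option.some.inj hu
    obtain rfl : x = v := Option.some.inj hv
    exact (map_zero _).trans (endpointParity_mk_self x).symm
  | x :: y :: l, u, v, hu, hv => by
    obtain rfl : x = u := Option.some.inj hu
    rw [List.getLast?_cons_cons] at hv
    rw [walkEdges_cons_cons, ← Multiset.singleton_add, map_add, degMod2_singleton,
      degMod2_walkEdges rfl hv, endpointParity_mk_add_mk]

theorem degMod2_eq_zero_of_even_count [DecidableEq V] {N : Multiset (Sym2 V)}
    (h : ∀ e, Even (N.count e)) : degMod2 w N = 0 := by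
  rw [degMod2_apply, Finset.sum_multiset_map_count]
  refine Finset.sum_eq_zero fun e _ => ?_
  rw [← Nat.cast_smul_eq_nsmul (ZMod 2), ZMod.natCast_eq_zero_iff_even.2 (h e), zero_smul]

theorem exists_walk_of_degMod2 (N : Multiset (Sym2 V)) {u v : V}
    (h : ∀ w, degMod2 w N = endpointParity w s(u, v)) :
    ∃ l : List V, l.head? = some u ∧ l.getLast? = some v ∧ walkEdges l ≤ N := by
  classical
  induction N using Multiset.strongInductionOn generalizing u with
  | ih N ih =>
    rcases eq_or_ne u v with rfl | huv
    · exact ⟨[u], rfl, rfl, Multiset.zero_le N⟩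
    obtain ⟨e, he, hue⟩ : ∃ e ∈ N, endpointParity u e ≠ 0 := by
      by_contra! h0
      refine endpointParity_mk_ne_zero huv ((h u).symm.trans (Multiset.sum_eq_zero fun _ hx => ?_))
      obtain ⟨e, he, rfl⟩ := Multiset.mem_map.1 hx
      exact h0 e he
    obtain ⟨x, rfl⟩ := Sym2.mem_iff_exists.1 (mem_of_endpointParity_ne_zero hue)
    obtain ⟨l, hlx, hlv, hle⟩ := ih _ (Multiset.erase_lt.2 he) (u := x) fun w => by
      have hN := h w
      rw [← Multiset.cons_erase he, ← Multiset.singleton_add, map_add, degMod2_singleton] at hN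
      rw [← endpointParity_mk_add_mk x u v, ← hN, Sym2.eq_swap, ← add_assoc,
        CharTwo.add_self_eq_zero, zero_add]
    cases l with
    | nil => simp at hlx
    | cons y l =>
      obtain rfl : y = x := Option.some.inj hlx
      refine ⟨u :: y :: l, rfl, by rwa [List.getLast?_cons_cons], ?_⟩
      rw [walkEdges_cons_cons, ← Multiset.cons_erase he]
      exact Multiset.cons_le_cons _ hle

theorem exists_nonempty_even_count_sum {ι α : Type*} [Fintype ι] [DecidableEq α]
    (U : Finset α) (hU : U.card < Fintype.card ι) (X : ι → Multiset α)
    (hX : ∀ i, ∀ a ∈ X i, a ∈ U) :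
    ∃ K : Finset ι, K.Nonempty ∧ ∀ a, Even ((∑ i ∈ K, X i).count a) := by
  let χ : ι → U → ZMod 2 := fun i a => ((X i).count a.1 : ZMod 2)
  have hdep : ¬ LinearIndependent (ZMod 2) χ := fun h => by
    have := h.fintype_card_le_finrank
    simp only [Module.finrank_fintype_fun_eq_card, Fintype.card_coe] at this
    omega
  obtain ⟨g, hg, i₀, hi₀⟩ := Fintype.not_linearIndependent_iff.1 hdep
  refine ⟨Finset.univ.filter (g · ≠ 0), ⟨i₀, by simpa using hi₀⟩, fun a => ?_⟩
  rw [Multiset.count_sum', ← ZMod.natCast_eq_zero_iff_even, Nat.cast_sum, Finset.sum_filter]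
  by_cases ha : a ∈ U
  · have key : ∀ g c : ZMod 2, (if g ≠ 0 then c else 0) = g * c := by decide
    simpa only [key, χ, Finset.sum_apply, Pi.smul_apply, smul_eq_mul, Pi.zero_apply]
      using congr_fun hg ⟨a, ha⟩
  · refine Finset.sum_eq_zero fun i _ => ?_
    rw [Multiset.count_eq_zero_of_notMem fun h => ha (hX i a h), Nat.cast_zero, ite_self]

-- A `ZMod 2`-dependency among the `X i`, viewed as vectors indexed by `U`, gives a family `K`
-- whose `X`-parts cancel mod 2; the right-hand side then has the vertex parities of `s(u j, v j)`.
theorem exists_walk_le_sum_of_card_lt {ι : Type*} [Fintype ι] [DecidableEq ι]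
    (U : Finset (Sym2 V)) (hU : U.card < Fintype.card ι) (u v : ι → V) (W : ι → List V)
    (hu : ∀ i, (W i).head? = some (u i)) (hv : ∀ i, (W i).getLast? = some (v i))
    (A X : ι → Multiset (Sym2 V)) (hAX : ∀ i, walkEdges (W i) = A i + X i)
    (hX : ∀ i, ∀ e ∈ X i, e ∈ U) :
    ∃ K : Finset ι, K.Nonempty ∧ ∀ j ∈ K, ∃ l : List V, l.head? = some (u j) ∧
      l.getLast? = some (v j) ∧
      walkEdges l ≤ ∑ i ∈ K, A i + ∑ i ∈ K.erase j, {s(u i, v i)} := by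
  classical
  obtain ⟨K, hK, heven⟩ := exists_nonempty_even_count_sum U hU X hX
  refine ⟨K, hK, fun j hj => exists_walk_of_degMod2 _ fun w => ?_⟩
  have hA : ∀ i, degMod2 w (A i) = endpointParity w s(u i, v i) + degMod2 w (X i) := fun i => by
    rw [← degMod2_walkEdges (hu i) (hv i), hAX, map_add, add_assoc, CharTwo.add_self_eq_zero,
      add_zero]
  rw [map_add, map_sum, map_sum, Finset.sum_congr rfl fun i _ => hA i, Finset.sum_add_distrib,
    ← map_sum, degMod2_eq_zero_of_even_count heven, add_zero, ← Finset.add_sum_erase K _ hj]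
  simp only [degMod2_singleton]
  rw [add_assoc, CharTwo.add_self_eq_zero, add_zero]

end Parity

section Greedy

variable {E : V → V → Prop} {k : ℕ} {a : Fin (k + 1) → V × V}
  {Ei : ℕ → V → V → Prop} {t : ℝ}

theorem rel_of_greedy (hE0 : Ei 0 = E)
    (hEsucc : ∀ i : Fin (k + 1), Ei ((i : ℕ) + 1) =
      fun x y => Ei (i : ℕ) x y ∨ (x, y) = a i ∨ (y, x) = a i) :
    ∀ n ≤ k + 1, ∀ x y,
      (E x y ∨ ∃ m : Fin (k + 1), (m : ℕ) < n ∧ s(x, y) = s((a m).1, (a m).2)) →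
        Ei n x y := by
  intro n
  induction n with
  | zero =>
    rintro - x y (h | ⟨m, hm, -⟩)
    · rwa [hE0]
    · omega
  | succ n ih =>
    intro hn x y h
    rw [hEsucc ⟨n, by omega⟩]
    rcases h with h | ⟨m, hm, hxy⟩
    · exact .inl (ih (by omega) x y (.inl h))
    rcases Nat.lt_succ_iff_lt_or_eq.1 hm with hm | hm
    · exact .inl (ih (by omega) x y (.inr ⟨m, hm, hxy⟩))
    rw [show a ⟨n, _⟩ = a m from congrArg a (Fin.ext hm.symm)]
    rcases (Sym2.mk_eq_mk_iff (p := (x, y)) (q := a m)).1 hxy with h | h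
    · exact .inr (.inl h)
    · exact .inr (.inr (by simpa using congrArg Prod.swap h))

theorem reflTransGen_of_greedy [PseudoMetricSpace V] [Std.Symm E] (ht : 0 ≤ t) (hE0 : Ei 0 = E)
    (hEsucc : ∀ i : Fin (k + 1), Ei ((i : ℕ) + 1) =
      fun x y => Ei (i : ℕ) x y ∨ (x, y) = a i ∨ (y, x) = a i)
    (hgreedy : ∀ i : Fin (k + 1),
      t * dist (a i).1 (a i).2 < graphDist (Ei (i : ℕ)) dist (a i).1 (a i).2) :
    ∀ n ≤ k + 1, ∀ x y, ReflTransGen (Ei n) x y → ReflTransGen E x y := by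
  intro n
  induction n with
  | zero => intro _ x y h; rwa [hE0] at h
  | succ n ih =>
    intro hn
    refine ReflTransGen.lift' id fun x y h => ?_
    have ha := ih (by omega) _ _ (reflTransGen_of_graphDist_pos
      ((mul_nonneg ht dist_nonneg).trans_lt (hgreedy ⟨n, by omega⟩)))
    rw [hEsucc ⟨n, by omega⟩] at h
    rcases h with h | h | h
    · exact ih (by omega) x y (.single h)
    · rwa [← h] at ha
    · rw [← h] at ha
      exact Std.Symm.symm _ _ ha

theorem reflTransGen_of_greedy_edge [PseudoMetricSpace V] [Std.Symm E] (ht : 0 ≤ t)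
    (hE0 : Ei 0 = E)
    (hEsucc : ∀ i : Fin (k + 1), Ei ((i : ℕ) + 1) =
      fun x y => Ei (i : ℕ) x y ∨ (x, y) = a i ∨ (y, x) = a i)
    (hgreedy : ∀ i : Fin (k + 1),
      t * dist (a i).1 (a i).2 < graphDist (Ei (i : ℕ)) dist (a i).1 (a i).2)
    (i : Fin (k + 1)) : ReflTransGen E (a i).1 (a i).2 :=
  reflTransGen_of_greedy ht hE0 hEsucc hgreedy i (by omega) _ _
    (reflTransGen_of_graphDist_pos ((mul_nonneg ht dist_nonneg).trans_lt (hgreedy i)))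

theorem exists_greedy_walk_lt [PseudoMetricSpace V] [Std.Symm E] (ht : 0 ≤ t) (hE0 : Ei 0 = E)
    (hEsucc : ∀ i : Fin (k + 1), Ei ((i : ℕ) + 1) =
      fun x y => Ei (i : ℕ) x y ∨ (x, y) = a i ∨ (y, x) = a i)
    (hgreedy : ∀ i : Fin (k + 1),
      t * dist (a i).1 (a i).2 < graphDist (Ei (i : ℕ)) dist (a i).1 (a i).2)
    (S : Finset (V × V)) (hS : S.card ≤ k) (W : Fin (k + 1) → List V)
    (hW : ∀ i,
      IsWalk (fun p q => E p q ∨ (p, q) ∈ S ∨ (q, p) ∈ S) (a i).1 (a i).2 (W i)) :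
    ∃ j : Fin (k + 1), ∃ J : Finset (Fin (k + 1)), J.card ≤ k ∧ (∀ m ∈ J, m < j) ∧
      t * dist (a j).1 (a j).2 < edgeMass (innerEdges E (a j).1) (walkEdges (W j)) +
        ∑ m ∈ J, (edgeMass (innerEdges E (a j).1) (walkEdges (W m)) +
          (componentEdges E (a j).1).indicator edgeDist s((a m).1, (a m).2)) := by
  classical
  obtain ⟨K, hK, hKwalk⟩ := exists_walk_le_sum_of_card_lt (S.image fun p => s(p.1, p.2))
    (Finset.card_image_le.trans_lt (by simpa using Nat.lt_succ_of_le hS))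
    (fun i => (a i).1) (fun i => (a i).2) W (fun i => (hW i).1) (fun i => (hW i).2.1)
    (fun i => (walkEdges (W i)).filter (· ∈ Sym2.fromRel ‹Std.Symm E›))
    (fun i => (walkEdges (W i)).filter (· ∉ Sym2.fromRel ‹Std.Symm E›))
    (fun i => (Multiset.filter_add_not _ _).symm) fun i e he => by
      obtain ⟨he, hnE⟩ := Multiset.mem_filter.1 he
      obtain ⟨x, y, hxy | hxy | hxy, rfl⟩ := exists_rel_of_mem_walkEdges (hW i).2.2 he
      · exact absurd (Sym2.fromRel_prop.2 hxy) hnE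
      · exact Finset.mem_image.2 ⟨_, hxy, rfl⟩
      · exact Finset.mem_image.2 ⟨_, hxy, Sym2.eq_swap⟩
  -- The greedy edges `a m` with `m ∈ K.erase j` are already present in `Ei j`.
  set j := K.max' hK
  have hjK : j ∈ K := K.max'_mem hK
  obtain ⟨l, hlu, hlv, hle⟩ := hKwalk j hjK
  have hJj : ∀ m ∈ K.erase j, m < j := fun m hm =>
    (K.le_max' m (Finset.mem_of_mem_erase hm)).lt_of_ne (Finset.ne_of_mem_erase hm)
  have hl : IsWalk (Ei j) (a j).1 (a j).2 l := by
    refine ⟨hlu, hlv, isChain_of_walkEdges (G := Sym2.fromRel ‹_› ∪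
      {e | ∃ m : Fin (k + 1), (m : ℕ) < j ∧ e = s((a m).1, (a m).2)})
      (fun x y h => rel_of_greedy hE0 hEsucc j (by omega) x y
        (((Set.mem_union _ _ _).1 h).imp Sym2.fromRel_prop.1 id)) fun e he => ?_⟩
    rcases Multiset.mem_add.1 (Multiset.mem_of_le hle he) with h | h
    · obtain ⟨i, -, hi⟩ := Multiset.mem_sum.1 h
      exact .inl (Multiset.mem_filter.1 hi).2
    · obtain ⟨m, hm, hi⟩ := Multiset.mem_sum.1 h
      exact .inr ⟨m, hJj m hm, Multiset.mem_singleton.1 hi⟩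
  have hcomp : ∀ e ∈ walkEdges l, e ∈ componentEdges E (a j).1 := fun e he x hx =>
    reflTransGen_of_greedy ht hE0 hEsucc hgreedy j (by omega) _ _
      (hl.reflTransGen_of_mem (mem_of_mem_walkEdges he hx))
  have hlen := walkLen_le_edgeMass hle hcomp
  rw [map_add, map_sum, map_sum, ← Finset.add_sum_erase K _ hjK, add_assoc,
    ← Finset.sum_add_distrib] at hlen
  simp only [edgeMass_filter, edgeMass_singleton] at hlen
  refine ⟨j, K.erase j, ?_, hJj,
    (hgreedy j).trans_le ((graphDist_le_walkLen (fun _ _ => dist_nonneg) hl).trans hlen)⟩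
  have := K.card_le_univ
  rw [Finset.card_erase_of_mem hjK, Fintype.card_fin] at *
  omega

end Greedy

theorem stmt6_general {V : Type*} [MetricSpace V] [Fintype V]
    (E : V → V → Prop) (hEsymm : Symmetric E) (t : ℝ) (ht : 1 < t) (k : ℕ)
    (a : Fin (k + 1) → V × V)
    (Ei : ℕ → (V → V → Prop)) (hE0 : Ei 0 = E)
    (hEsucc : ∀ i : Fin (k + 1), Ei ((i : ℕ) + 1) =
      fun x y => Ei (i : ℕ) x y ∨ (x, y) = a i ∨ (y, x) = a i)
    (hgreedy : ∀ i : Fin (k + 1),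
      t * dist (a i).1 (a i).2 < graphDist (Ei (i : ℕ)) dist (a i).1 (a i).2)
    (hmin : ∀ i : Fin (k + 1), ∀ x y : V, x ≠ y → dist x y < dist (a i).1 (a i).2 →
      graphDist (Ei (i : ℕ)) dist x y ≤ t * dist x y)
    (hmono : ∀ i j : Fin (k + 1), i ≤ j → dist (a i).1 (a i).2 ≤ dist (a j).1 (a j).2)
    (S : Finset (V × V)) (hS : S.card = k) (tstar : ℝ)
    (hdil : ∀ x y : V, x ≠ y →
      graphDist (fun p q => E p q ∨ (p, q) ∈ S ∨ (q, p) ∈ S) dist x y ≤ tstar * dist x y) :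
    t < ((k : ℝ) + 1) * tstar := by
  by_contra! hcon
  have : Std.Symm E := ⟨fun _ _ h => hEsymm h⟩
  have hEEi : ∀ i : Fin (k + 1), E ≤ Ei i := fun i x y h =>
    rel_of_greedy hE0 hEsucc i (by omega) x y (.inl h)
  have hne : ∀ i, (a i).1 ≠ (a i).2 := fun i => ne_of_mul_dist_lt_graphDist (hgreedy i)
  have hconn := reflTransGen_of_greedy_edge (by linarith) hE0 hEsucc hgreedy
  choose W hW hWlen using fun i => exists_isWalk_walkLen_le
    (ReflTransGen.mono (fun _ _ => Or.inl) _ _ (hconn i)) (hdil _ _ (hne i))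
  have hτ : 1 ≤ tstar := by
    have := (dist_le_walkLen (hW 0)).trans (hWlen 0)
    exact le_of_mul_le_mul_right (by linarith) (dist_pos.2 (hne 0))
  obtain ⟨j, J, hJ, hJj, hlt⟩ :=
    exists_greedy_walk_lt (by linarith) hE0 hEsucc hgreedy S hS.le W hW
  have hAj := sub_one_mul_edgeMass_innerEdges_le (hEEi j) (by linarith) (hmin j) .refl
    (hconn j) (hW j).1 (hW j).2.1 (hgreedy j) (hWlen j)
  have hAJ := Finset.sum_le_sum fun m hm =>
    (sub_one_mul_add_indicator_le (u₀ := (a j).1) (hEEi m) ht.le hτ (hmin m) (hconn m) (hW m).1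
      (hW m).2.1 (hgreedy m) (hWlen m)).trans
    (mul_le_mul_of_nonneg_left (hmono m j (hJj m hm).le) (by nlinarith))
  rw [← Finset.mul_sum, Finset.sum_const, nsmul_eq_mul] at hAJ
  have hJk : (J.card : ℝ) ≤ k := by exact_mod_cast hJ
  have hd := dist_nonneg (x := (a j).1) (y := (a j).2)
  -- With `d = dist (a j).1 (a j).2`: `(t - 1) t d < t (tstar - 1) d + k (t tstar - 1) d`,
  -- which is at most `(t ^ 2 - t) d`.
  nlinarith [mul_nonneg (mul_nonneg (sub_nonneg.2 hJk) (by nlinarith : 0 ≤ t * tstar - 1)) hd,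
    mul_nonneg (mul_nonneg (by linarith : 0 ≤ t) (sub_nonneg.2 hcon)) hd,
    mul_pos (sub_pos.2 ht) (sub_pos.2 hlt)]

/-- If the greedy spanner augmentation algorithm with parameter `t` on an initial metric graph
`G = (V, E)` adds at least `k + 1` edges `a 0, …, a k` (in nondecreasing order of length,
each greedy: shortest edge whose current shortest-path distance exceeds `t` times its metric
length), then `t < (k + 1) · t*`, where `t*` is the dilation of `G ∪ S` for any set `S` of
`k` added edges (in particular for the optimal one). -/
theorem stmt6 {V : Type*} [MetricSpace V] [Fintype V]
    (E : V → V → Prop) (hEsymm : Symmetric E) (t : ℝ) (ht : 1 < t) (k : ℕ)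
    (a : Fin (k + 1) → V × V) (hane : ∀ i, (a i).1 ≠ (a i).2)
    (Ei : ℕ → (V → V → Prop)) (hE0 : Ei 0 = E)
    (hEsucc : ∀ i : Fin (k + 1), Ei ((i : ℕ) + 1) =
      fun x y => Ei (i : ℕ) x y ∨ (x, y) = a i ∨ (y, x) = a i)
    (hgreedy : ∀ i : Fin (k + 1),
      t * dist (a i).1 (a i).2 < graphDist (Ei (i : ℕ)) dist (a i).1 (a i).2)
    (hmin : ∀ i : Fin (k + 1), ∀ x y : V, x ≠ y → dist x y < dist (a i).1 (a i).2 →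
      graphDist (Ei (i : ℕ)) dist x y ≤ t * dist x y)
    (hmono : ∀ i j : Fin (k + 1), i ≤ j → dist (a i).1 (a i).2 ≤ dist (a j).1 (a j).2)
    (S : Finset (V × V)) (hS : S.card = k) (tstar : ℝ)
    (hdil : ∀ x y : V, x ≠ y →
      graphDist (fun p q => E p q ∨ (p, q) ∈ S ∨ (q, p) ∈ S) dist x y ≤ tstar * dist x y) :
    t < ((k : ℝ) + 1) * tstar :=
  stmt6_general E hEsymm t ht k a Ei hE0 hEsucc hgreedy hmin hmono S hS tstar hdil
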